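/- arXiv:2205.03180 — 2 statements merged into one kernel-verified Lean document; each statement's English description precedes it below -/
import Mathlib

section
/- Let M be a simple coloopless p-matroid with es-splitting matroid M^e_{a,b} and take e = b. Then the set E(M^e_{a,b}) \ {a, e, z} is a hyperplane of M^e_{a,b}; equivalently, {a, e, z} is a cocircuit of M^e_{a,b}. -/
open Matrix Set

variable {α : Type*}

/-- The columns of `A` indexed by `S` are linearly independent. -/
def ColIndep {m E F : Type*} [Semiring F] (A : Matrix m E F) (S : Set E) : Prop :=
  LinearIndependent F (fun s : S => Aᵀ s.1)

/-- `M` is the vector matroid of the matrix `A` (ground set all columns). -/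
def IsVectorMatroid {m E F : Type*} [Semiring F] (M : Matroid E) (A : Matrix m E F) : Prop :=
  M.E = Set.univ ∧ ∀ S : Set E, M.Indep S ↔ ColIndep A S

/-- The splitting matrix `A_{a,b}`: `A` with an extra row having `α` in columns `a`, `b`
and `0` elsewhere. -/
def splitMatrix {m E F : Type*} [Zero F] [DecidableEq E] (A : Matrix m E F) (a b : E) (α : F) :
    Matrix (m ⊕ Unit) E F :=
  Matrix.of fun i j =>
    Sum.elim (fun i' => A i' j) (fun _ => if j = a ∨ j = b then α else 0) i

/-- The column `z = (0,…,0,α)ᵀ`. -/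
def zColumn {m F : Type*} [Zero F] (α : F) : m ⊕ Unit → F :=
  Sum.elim (fun _ => 0) (fun _ => α)

/-- The es-splitting matrix `A^e_{a,b}`: the splitting matrix with two extra columns,
`Sum.inr 0 ↦ z = (0,…,0,α)ᵀ` and `Sum.inr 1 ↦ γ = e - z`. -/
def esMatrix {m E F : Type*} [Ring F] [DecidableEq E] (A : Matrix m E F) (a b e : E) (α : F) :
    Matrix (m ⊕ Unit) (E ⊕ Fin 2) F :=
  Matrix.of fun i j =>
    Sum.elim (fun x => splitMatrix A a b α i x)
      (fun k => if k = (0 : Fin 2) then zColumn α i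
                else splitMatrix A a b α i e - zColumn α i) j

/-- A circuit of a matroid: a minimal dependent set. -/
def IsCircuit (M : Matroid α) (C : Set α) : Prop :=
  M.Dep C ∧ ∀ D, D ⊂ C → M.Indep D

/-- The (ℕ-valued) rank of a set in a matroid: the largest size of an independent subset. -/
noncomputable def rk (M : Matroid α) (X : Set α) : ℕ :=
  sSup {n | ∃ I, I ⊆ X ∧ M.Indep I ∧ I.ncard = n}

/-- Every element lies in some circuit. -/
def Coloopless (M : Matroid α) : Prop :=
  ∀ x ∈ M.E, ∃ C, IsCircuit M C ∧ x ∈ C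

/-- A simple matroid: every subset of the ground set with at most two elements is independent. -/
def SimpleMatroid (M : Matroid α) : Prop :=
  ∀ X ⊆ M.E, X.ncard ≤ 2 → M.Indep X

/-- A matroid is connected if every two distinct elements lie in a common circuit. -/
def ConnectedMatroid (M : Matroid α) : Prop :=
  ∀ x ∈ M.E, ∀ y ∈ M.E, x ≠ y → ∃ C, IsCircuit M C ∧ x ∈ C ∧ y ∈ C

/-- A `k`-separation of `M`: a partition `{S, T}` of the ground set with `|S|, |T| ≥ k` and
`r(S) + r(T) - r(M) < k`. -/
def KSeparation (M : Matroid α) (k : ℕ) (S T : Set α) : Prop :=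
  S ∪ T = M.E ∧ Disjoint S T ∧ k ≤ S.ncard ∧ k ≤ T.ncard ∧
    rk M S + rk M T < rk M M.E + k

/-- `M` is `n`-connected: it has no `k`-separation for `1 ≤ k ≤ n - 1`. -/
def NConnected (M : Matroid α) (n : ℕ) : Prop :=
  ∀ k S T, 1 ≤ k → k ≤ n - 1 → ¬ KSeparation M k S T

/-- A matroid is Eulerian if its ground set is a disjoint union of circuits. -/
def Eulerian (M : Matroid α) : Prop :=
  ∃ (n : ℕ) (D : Fin n → Set α), (∀ i, IsCircuit M (D i)) ∧
    (∀ i j, i ≠ j → Disjoint (D i) (D j)) ∧ (⋃ i, D i) = M.E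

/-- `C` carries a linear dependence of the columns of `A` with all coefficients nonzero
exactly on `C`, whose coefficients at `a` and `b` sum to zero. -/
def HasPDependence {m E F : Type*} [Semiring F] [Fintype E] (A : Matrix m E F)
    (a b : E) (C : Set E) : Prop :=
  ∃ c : E → F, (∀ x, x ∈ C ↔ c x ≠ 0) ∧ (∑ x, c x • Aᵀ x) = 0 ∧ c a + c b = 0

/-- A `p`-circuit of the vector matroid `M = M[A]` with respect to `a, b`. -/
def IsPCircuit {m E F : Type*} [Semiring F] [Fintype E] (M : Matroid E) (A : Matrix m E F)
    (a b : E) (C : Set E) : Prop :=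
  IsCircuit M C ∧ a ∈ C ∧ b ∈ C ∧ HasPDependence A a b C

/-- An `np`-circuit: a circuit meeting `{a, b}` that is not a `p`-circuit. -/
def IsNpCircuit {m E F : Type*} [Semiring F] [Fintype E] (M : Matroid E) (A : Matrix m E F)
    (a b : E) (C : Set E) : Prop :=
  IsCircuit M C ∧ (C ∩ {a, b}).Nonempty ∧ ¬ HasPDependence A a b C

/-!
In `A^b_{a,b}` the columns `a`, `b`, `z` are exactly those with nonzero last coordinate, so the
remaining columns `H` lie in a coordinate hyperplane and `H` is a flat. Among them are `(A x, 0)`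
for every `x ≠ a` (for `x = b` this is `γ = b - z`), and since `a` is not a coloop of `M`, also
`(A a, 0)`. Each of `a`, `b`, `z` is `z` modulo these vectors, so adding any one of them to `H`
spans everything: `H` is a hyperplane, hence its complement is a cocircuit.
-/

lemma isCircuit_iff_matroid_isCircuit {M : Matroid α} {C : Set α} :
    IsCircuit M C ↔ M.IsCircuit C :=
  Matroid.isCircuit_iff_forall_ssubset.symm

namespace Matroid

variable {M : Matroid α} {H J X : Set α} {e : α}

lemma IsBasis.rk_eq_ncard [_root_.Finite α] (hJ : M.IsBasis J X) : rk M X = J.ncard := by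
  have hub : ∀ n ∈ {n | ∃ I, I ⊆ X ∧ M.Indep I ∧ I.ncard = n}, n ≤ J.ncard := by
    rintro n ⟨I, hIX, hI, rfl⟩
    obtain ⟨J', hJ', hIJ'⟩ := hI.subset_isBasis_of_subset hIX hJ.subset_ground
    rw [← hJ'.isBase_restrict.ncard_eq_ncard_of_isBase hJ.isBase_restrict]
    exact Set.ncard_le_ncard hIJ'
  have hJmem : J.ncard ∈ {n | ∃ I, I ⊆ X ∧ M.Indep I ∧ I.ncard = n} :=
    ⟨J, hJ.subset, hJ.indep, rfl⟩
  exact le_antisymm (csSup_le ⟨_, hJmem⟩ hub) (le_csSup ⟨_, hub⟩ hJmem)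

lemma IsFlat.insert_isBase (hH : M.IsFlat H) (hJ : M.IsBasis J H) (he : e ∈ M.E \ H)
    (hspan : M.E ⊆ M.closure (insert e H)) : M.IsBase (insert e J) := by
  have hcl : M.closure J = H := hJ.closure_eq_closure.trans hH.closure
  have heJ : e ∉ J := fun h => he.2 (hJ.subset h)
  refine (hJ.indep.insert_indep_iff_of_notMem heJ |>.mpr ⟨he.1, hcl ▸ he.2⟩)
    |>.isBase_of_ground_subset_closure ?_
  rwa [← closure_insert_closure_eq_closure_insert, hcl]

lemma IsFlat.rk_add_one_eq [_root_.Finite α] (hH : M.IsFlat H) (he : e ∈ M.E \ H)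
    (hspan : M.E ⊆ M.closure (insert e H)) : rk M H + 1 = rk M M.E := by
  obtain ⟨J, hJ⟩ := M.exists_isBasis H
  rw [hJ.rk_eq_ncard, (hH.insert_isBase hJ he hspan).isBasis_ground.rk_eq_ncard,
    Set.ncard_insert_of_notMem fun h => he.2 (hJ.subset h)]

lemma IsFlat.isCocircuit_ground_diff (hH : M.IsFlat H) (hne : (M.E \ H).Nonempty)
    (hspan : ∀ e ∈ M.E \ H, M.E ⊆ M.closure (insert e H)) : M.IsCocircuit (M.E \ H) := by
  rw [isCocircuit_def, isCircuit_iff_forall_ssubset]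
  refine ⟨⟨fun hK => ?_, sdiff_subset⟩, fun I hI => ?_⟩
  · have hEH : M.E ⊆ H := by
      rw [← hH.closure, ← (coindep_iff_closure_compl_eq_ground sdiff_subset).mp hK,
        sdiff_sdiff_cancel_left hH.subset_ground]
    exact hne.ne_empty (sdiff_eq_empty.mpr hEH)
  · obtain ⟨e, heK, heI⟩ := exists_of_ssubset hI
    refine (coindep_iff_closure_compl_eq_ground (hI.subset.trans sdiff_subset)).mpr
      ((closure_subset_ground _ _).antisymm ((hspan e heK).trans (M.closure_subset_closure ?_)))
    exact insert_subset ⟨heK.1, heI⟩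
      fun x hx => ⟨hH.subset_ground hx, fun hxI => (hI.subset hxI).2 hx⟩

end Matroid

lemma Coloopless.mem_closure_ground_diff {M : Matroid α} (hc : Coloopless M) {x : α}
    (hx : x ∈ M.E) : x ∈ M.closure (M.E \ {x}) := by
  obtain ⟨C, hC, hxC⟩ := hc x hx
  rw [isCircuit_iff_matroid_isCircuit] at hC
  exact M.closure_subset_closure (sdiff_subset_sdiff_left hC.subset_ground)
    (hC.mem_closure_sdiff_singleton_of_mem hxC)

namespace IsVectorMatroid

variable {F m ι : Type*} [Field F] {M : Matroid ι} {A : Matrix m ι F}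

lemma mem_closure_iff_of_indep (hM : IsVectorMatroid M A) {I : Set ι} (hI : M.Indep I) {x : ι} :
    x ∈ M.closure I ↔ Aᵀ x ∈ Submodule.span F (Aᵀ '' I) := by
  by_cases hxI : x ∈ I
  · exact iff_of_true (M.subset_closure I hI.subset_ground hxI)
      (Submodule.subset_span (mem_image_of_mem _ hxI))
  have hAI : LinearIndepOn F Aᵀ I := (hM.2 I).1 hI
  rw [hI.mem_closure_iff_of_notMem hxI, Matroid.dep_iff, hM.1, and_iff_left (subset_univ _),
    hM.2]
  exact ⟨fun h => by_contra fun hx => h ((linearIndepOn_insert hxI).mpr ⟨hAI, hx⟩),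
    fun h hi => ((linearIndepOn_insert hxI).mp hi).2 h⟩

lemma mem_closure_iff (hM : IsVectorMatroid M A) {X : Set ι} {x : ι} :
    x ∈ M.closure X ↔ Aᵀ x ∈ Submodule.span F (Aᵀ '' X) := by
  obtain ⟨I, hI⟩ := M.exists_isBasis X (hM.1 ▸ subset_univ X)
  have hspan : Submodule.span F (Aᵀ '' I) = Submodule.span F (Aᵀ '' X) := by
    refine (Submodule.span_mono (image_mono hI.subset)).antisymm (Submodule.span_le.mpr ?_)
    rintro _ ⟨y, hy, rfl⟩
    exact (hM.mem_closure_iff_of_indep hI.indep).mp (hI.subset_closure hy)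
  rw [← hI.closure_eq_closure, hM.mem_closure_iff_of_indep hI.indep, hspan]

lemma isFlat_setOf_map_eq_zero (hM : IsVectorMatroid M A) (φ : (m → F) →ₗ[F] F) :
    M.IsFlat {j | φ (Aᵀ j) = 0} := by
  refine Matroid.isFlat_iff_closure_eq.mpr
    (Subset.antisymm (fun x hx => ?_) (M.subset_closure _ (hM.1 ▸ subset_univ _)))
  have hker : Submodule.span F (Aᵀ '' {j | φ (Aᵀ j) = 0}) ≤ LinearMap.ker φ :=
    Submodule.span_le.mpr (by rintro _ ⟨j, hj, rfl⟩; exact hj)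
  exact hker (hM.mem_closure_iff.mp hx)

end IsVectorMatroid

def appendZero (R m : Type*) [Semiring R] : (m → R) →ₗ[R] (m ⊕ Unit → R) where
  toFun v := Sum.elim v 0
  map_add' u v := by ext (i | i) <;> simp
  map_smul' c v := by ext (i | i) <;> simp

@[simp] lemma appendZero_apply {R m : Type*} [Semiring R] (v : m → R) :
    appendZero R m v = Sum.elim v 0 := rfl

section EsMatrix

variable {m E F : Type*} [Field F] [DecidableEq E] (A : Matrix m E F) (a b e : E) (α : F)

lemma esMatrix_col_inl (x : E) : (esMatrix A a b e α)ᵀ (Sum.inl x) =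
    appendZero F m (Aᵀ x) + if x = a ∨ x = b then zColumn α else 0 := by
  ext (i | i) <;> by_cases h : x = a ∨ x = b <;> simp [esMatrix, splitMatrix, zColumn, h]

lemma esMatrix_col_inr_zero : (esMatrix A a b e α)ᵀ (Sum.inr 0) = zColumn α := by
  ext i; simp [esMatrix]

lemma esMatrix_col_inr_one :
    (esMatrix A a b e α)ᵀ (Sum.inr 1) = (esMatrix A a b e α)ᵀ (Sum.inl e) - zColumn α := by
  ext i; simp [esMatrix]

lemma esMatrix_col_inr_one_of_eq :
    (esMatrix A a b b α)ᵀ (Sum.inr 1) = appendZero F m (Aᵀ b) := by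
  rw [esMatrix_col_inr_one, esMatrix_col_inl]; simp

variable {A a b α}

lemma setOf_esMatrix_col_inr_eq_zero (hα : α ≠ 0) :
    {j | (esMatrix A a b b α)ᵀ j (Sum.inr ()) = 0} =
      univ \ ({Sum.inl a, Sum.inl b, Sum.inr 0} : Set (E ⊕ Fin 2)) := by
  ext (x | k)
  · rw [mem_ofPred_eq, esMatrix_col_inl]
    by_cases h : x = a ∨ x = b <;> simp [h, zColumn, hα]
  · match k with
    | 0 => rw [mem_ofPred_eq, esMatrix_col_inr_zero]; simp [zColumn, hα]
    | 1 => rw [mem_ofPred_eq, esMatrix_col_inr_one_of_eq]; simp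

lemma exists_esMatrix_col_eq_appendZero {x : E} (hx : x ≠ a) :
    ∃ j ∉ ({Sum.inl a, Sum.inl b, Sum.inr 0} : Set (E ⊕ Fin 2)),
      (esMatrix A a b b α)ᵀ j = appendZero F m (Aᵀ x) := by
  by_cases hxb : x = b
  · subst hxb
    exact ⟨Sum.inr 1, by simp, esMatrix_col_inr_one_of_eq A a x α⟩
  · exact ⟨Sum.inl x, by simp [hx, hxb], by simp [esMatrix_col_inl, hx, hxb]⟩

variable {M : Matroid E}

lemma appendZero_mem_span_esMatrix (hM : IsVectorMatroid M A) (hc : Coloopless M) (x : E) :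
    appendZero F m (Aᵀ x) ∈ Submodule.span F
      ((esMatrix A a b b α)ᵀ '' (univ \ {Sum.inl a, Sum.inl b, Sum.inr 0})) := by
  have hne : ∀ y ≠ a, appendZero F m (Aᵀ y) ∈ Submodule.span F
      ((esMatrix A a b b α)ᵀ '' (univ \ {Sum.inl a, Sum.inl b, Sum.inr 0})) := fun y hy =>
    let ⟨j, hj, hcol⟩ := exists_esMatrix_col_eq_appendZero hy
    Submodule.subset_span ⟨j, ⟨trivial, hj⟩, hcol⟩
  rcases eq_or_ne x a with rfl | hxa
  · have hx : Aᵀ x ∈ Submodule.span F (Aᵀ '' (univ \ {x})) :=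
      hM.mem_closure_iff.mp (hM.1 ▸ hc.mem_closure_ground_diff (hM.1 ▸ mem_univ x))
    have hx' := Submodule.mem_map_of_mem (f := appendZero F m) hx
    rw [← Submodule.span_image] at hx'
    exact Submodule.span_le.mpr (by rintro _ ⟨_, ⟨y, hy, rfl⟩, rfl⟩; exact hne y hy.2) hx'
  · exact hne x hxa

lemma esMatrix_col_mem_span_insert (hM : IsVectorMatroid M A) (hc : Coloopless M)
    {e : E ⊕ Fin 2} (he : e ∈ ({Sum.inl a, Sum.inl b, Sum.inr 0} : Set (E ⊕ Fin 2)))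
    (j : E ⊕ Fin 2) : (esMatrix A a b b α)ᵀ j ∈ Submodule.span F
      ((esMatrix A a b b α)ᵀ '' insert e (univ \ {Sum.inl a, Sum.inl b, Sum.inr 0})) := by
  set S := Submodule.span F
    ((esMatrix A a b b α)ᵀ '' insert e (univ \ {Sum.inl a, Sum.inl b, Sum.inr 0}))
  have hpad : ∀ x, appendZero F m (Aᵀ x) ∈ S := fun x =>
    Submodule.span_mono (image_mono (subset_insert _ _)) (appendZero_mem_span_esMatrix hM hc x)
  have heS : (esMatrix A a b b α)ᵀ e ∈ S :=
    Submodule.subset_span (mem_image_of_mem _ (mem_insert _ _))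
  have hz : zColumn α ∈ S := by
    simp only [mem_insert_iff, mem_singleton_iff] at he
    rcases he with rfl | rfl | rfl
    · rw [esMatrix_col_inl, if_pos (Or.inl rfl)] at heS
      simpa using S.sub_mem heS (hpad a)
    · rw [esMatrix_col_inl, if_pos (Or.inr rfl)] at heS
      simpa using S.sub_mem heS (hpad b)
    · rwa [esMatrix_col_inr_zero] at heS
  rcases j with x | k
  · rw [esMatrix_col_inl]
    exact S.add_mem (hpad x) (by split_ifs; exacts [hz, S.zero_mem])
  · match k with
    | 0 => rw [esMatrix_col_inr_zero]; exact hz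
    | 1 => rw [esMatrix_col_inr_one_of_eq]; exact hpad b

end EsMatrix

variable {m E : Type*} [Fintype m] [Fintype E] [DecidableEq E] {p : ℕ} [Fact p.Prime]

theorem esSplitting_cocircuit_general (A : Matrix m E (ZMod p)) (a b : E)
    (α : ZMod p) (hα : α ≠ 0)
    (M : Matroid E) (hM : IsVectorMatroid M A)
    (hc : Coloopless M)
    (M' : Matroid (E ⊕ Fin 2)) (hM' : IsVectorMatroid M' (esMatrix A a b b α)) :
    (M'.IsFlat (Set.univ \ {Sum.inl a, Sum.inl b, Sum.inr 0}) ∧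
      rk M' (Set.univ \ {Sum.inl a, Sum.inl b, Sum.inr 0}) + 1 = rk M' M'.E) ∧
    IsCircuit M'✶ {Sum.inl a, Sum.inl b, Sum.inr 0} := by
  set K : Set (E ⊕ Fin 2) := {Sum.inl a, Sum.inl b, Sum.inr 0}
  have hflat : M'.IsFlat (univ \ K) := by
    rw [← setOf_esMatrix_col_inr_eq_zero hα]
    exact hM'.isFlat_setOf_map_eq_zero (LinearMap.proj (Sum.inr ()))
  have hK : M'.E \ (univ \ K) = K := by rw [hM'.1, sdiff_sdiff_cancel_left (subset_univ K)]
  have hspan : ∀ e ∈ M'.E \ (univ \ K), M'.E ⊆ M'.closure (insert e (univ \ K)) := by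
    rw [hK]
    exact fun e he j _ => hM'.mem_closure_iff.mpr (esMatrix_col_mem_span_insert hM hc he j)
  have hz : Sum.inr 0 ∈ M'.E \ (univ \ K) := by rw [hK]; simp [K]
  refine ⟨⟨hflat, hflat.rk_add_one_eq hz (hspan _ hz)⟩, ?_⟩
  rw [isCircuit_iff_matroid_isCircuit, ← hK]
  exact hflat.isCocircuit_ground_diff ⟨_, hz⟩ hspan

theorem esSplitting_cocircuit (A : Matrix m E (ZMod p)) (a b : E) (hab : a ≠ b)
    (α : ZMod p) (hα : α ≠ 0)
    (M : Matroid E) (hM : IsVectorMatroid M A)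
    (hs : SimpleMatroid M) (hc : Coloopless M)
    (M' : Matroid (E ⊕ Fin 2)) (hM' : IsVectorMatroid M' (esMatrix A a b b α)) :
    (M'.IsFlat (Set.univ \ {Sum.inl a, Sum.inl b, Sum.inr 0}) ∧
      rk M' (Set.univ \ {Sum.inl a, Sum.inl b, Sum.inr 0}) + 1 = rk M' M'.E) ∧
    IsCircuit M'✶ {Sum.inl a, Sum.inl b, Sum.inr 0} :=
  esSplitting_cocircuit_general A a b α hα M hM hc M' hM'
end

section
/- Let M be a p-matroid (p > 2) and suppose the es-splitting matroid M^e_{a,b} (with e = b) is Eulerian. Then there exists a collection of circuits {C_np, C_1, ..., C_k} of M with C_np an np-circuit containing both a and b, E(M) = C_np ∪ C_1 ∪ ... ∪ C_k, and all circuits in the collection pairwise disjoint except C_np ∩ C_1 = {b}. -/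
open Matrix Set

variable {α : Type*}

variable {m E : Type*} [Fintype m] [Fintype E] [DecidableEq E] {p : ℕ} [Fact p.Prime]

/-!
Each element of the Eulerian matroid `M'` lies in exactly one circuit `D i` of its partition.
The bottom row of the es-splitting matrix forces every dependence `c` of `M'` to satisfy
`c a + c b + c z = 0`; hence `a` and `b` both lie in the circuit `D_z` through `z`, and `γ` does
not, as the column of `b` is `z + γ`. Contracting `z` deletes the bottom row, so `D_z \ {z}` is a
circuit of `M`; it is not a `p`-circuit, because a `p`-dependence of it would be a dependence
of `M'` avoiding `z`. The other circuits `D i` avoid `a`, `b` and `z`, and on such sets `M'` is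
`M` with `b` renamed to `γ`, so `D_γ` with `γ` replaced by `b`, and each remaining `D i`, are
circuits of `M` meeting `D_z` only in `b`.
-/

theorem IsCircuit.of_indep_iff {β : Type*} {M : Matroid α} {N : Matroid β} {f : Set α → Set β}
    {C : Set α} (hC : IsCircuit N (f C)) (hCE : C ⊆ M.E) (hf : ∀ U ⊂ C, f U ⊂ f C)
    (hind : ∀ U ⊆ C, M.Indep U ↔ N.Indep (f U)) : IsCircuit M C :=
  ⟨⟨fun hi => hC.1.not_indep ((hind C subset_rfl).1 hi), hCE⟩,
    fun U hU => (hind U hU.subset).2 (hC.2 _ (hf U hU))⟩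

section LinearAlgebra

variable {ι K V W : Type*} [Field K] [AddCommGroup V] [Module K V] [AddCommGroup W] [Module K W]

theorem linearIndepOn_insert_iff_comp {P : V →ₗ[K] W} {z : V} (hz : z ≠ 0)
    (hker : LinearMap.ker P = K ∙ z) {f : ι → V} {s : Set ι} {i : ι} (hi : i ∉ s)
    (hfi : f i = z) : LinearIndepOn K f (insert i s) ↔ LinearIndepOn K (P ∘ f) s := by
  rw [linearIndepOn_insert hi, hfi]
  constructor
  · rintro ⟨hs, hzs⟩
    refine linearIndepOn_iff.2 fun l hl hPl => linearIndepOn_iff.1 hs l hl ?_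
    rw [← Finsupp.apply_linearCombination, ← LinearMap.mem_ker, hker,
      Submodule.mem_span_singleton] at hPl
    obtain ⟨t, ht⟩ := hPl
    have ht0 : t = 0 := by
      by_contra ht0
      refine hzs ?_
      rw [← inv_smul_smul₀ ht0 z, ht]
      exact Submodule.smul_mem _ _ ((Finsupp.mem_span_image_iff_linearCombination K).2 ⟨l, hl, rfl⟩)
    rw [← ht, ht0, zero_smul]
  · intro h
    refine ⟨h.of_comp P, fun hzs => hz ?_⟩
    obtain ⟨l, hl, rfl⟩ := (Finsupp.mem_span_image_iff_linearCombination K).1 hzs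
    have hPl : Finsupp.linearCombination K (P ∘ f) l = 0 := by
      rw [← Finsupp.apply_linearCombination, ← LinearMap.mem_ker, hker]
      exact Submodule.mem_span_singleton_self _
    rw [linearIndepOn_iff.1 h l hl hPl, map_zero]

theorem linearIndepOn_image_iff {ι' : Type*} {f : ι → ι'} {s : Set ι} (hf : InjOn f s)
    {v : ι' → V} : LinearIndepOn K v (f '' s) ↔ LinearIndepOn K (v ∘ f) s :=
  ⟨fun h => h.comp_of_image hf, .image_of_comp _ _⟩

end LinearAlgebra

theorem IsVectorMatroid.exists_linearCombination_eq_zero_support_eq {ι m F : Type*} [Field F]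
    {M : Matroid ι} {A : Matrix m ι F} (hM : IsVectorMatroid M A) {C : Set ι}
    (hC : IsCircuit M C) :
    ∃ l : ι →₀ F, Finsupp.linearCombination F (Aᵀ ·) l = 0 ∧ (l.support : Set ι) = C := by
  obtain ⟨l, hlC, hl, hl0⟩ := linearDepOn_iff'.1 fun h => hC.1.not_indep ((hM.2 C).2 h)
  refine ⟨l, hl, (Finsupp.mem_supported F l).1 hlC |>.eq_of_not_ssubset fun hss => hl0 ?_⟩
  exact linearIndepOn_iff.1 ((hM.2 _).1 (hC.2 _ hss)) l
    ((Finsupp.mem_supported F l).2 subset_rfl) hl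

section EsSplitting

variable {m E F : Type*} [Field F] [DecidableEq E] {A : Matrix m E F} {a b : E} {α : F}
  {M : Matroid E} {M' : Matroid (E ⊕ Fin 2)} {D : Set (E ⊕ Fin 2)}

theorem esMatrix_transpose_inl (x : E) : (esMatrix A a b b α)ᵀ (.inl x) =
    Sum.elim (Aᵀ x) (fun _ => if x = a ∨ x = b then α else 0) := by
  ext (i | i) <;> rfl

theorem esMatrix_transpose_z : (esMatrix A a b b α)ᵀ (.inr 0) = zColumn α := by
  ext (i | i) <;> rfl

theorem esMatrix_transpose_gamma : (esMatrix A a b b α)ᵀ (.inr 1) = Sum.elim (Aᵀ b) 0 := by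
  ext (i | i) <;> simp [esMatrix, splitMatrix, zColumn]

theorem esMatrix_transpose_inl_b :
    (esMatrix A a b b α)ᵀ (.inl b) =
      (esMatrix A a b b α)ᵀ (.inr 0) + (esMatrix A a b b α)ᵀ (.inr 1) := by
  ext (i | i) <;> simp [esMatrix, splitMatrix, zColumn]

theorem sum_smul_esMatrix_transpose_inl [Fintype E] (hab : a ≠ b) (c : E → F) :
    ∑ x, c x • (esMatrix A a b b α)ᵀ (.inl x) =
      Sum.elim (∑ x, c x • Aᵀ x) (fun _ => (c a + c b) * α) := by
  ext (i | i)
  · simp [esMatrix_transpose_inl, Finset.sum_apply]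
  · rw [Finset.sum_apply, Fintype.sum_eq_add a b hab fun x hx => by
      simp [esMatrix_transpose_inl, hx.1, hx.2]]
    simp [esMatrix_transpose_inl, add_mul]

theorem esMatrix_bottom_eq_zero [Fintype E] (hab : a ≠ b) (hα : α ≠ 0) {l : E ⊕ Fin 2 →₀ F}
    (hl : Finsupp.linearCombination F ((esMatrix A a b b α)ᵀ ·) l = 0) :
    l (.inl a) + l (.inl b) + l (.inr 0) = 0 := by
  rw [Finsupp.linearCombination_apply, Finsupp.sum_fintype _ _ (by simp), Fintype.sum_sum_type,
    sum_smul_esMatrix_transpose_inl hab, Fin.sum_univ_two, esMatrix_transpose_z,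
    esMatrix_transpose_gamma] at hl
  simpa [zColumn, ← add_mul, hα] using congrFun hl (.inr ())

theorem ker_funLeft_inl (hα : α ≠ 0) :
    LinearMap.ker (LinearMap.funLeft F F (Sum.inl : m → m ⊕ Unit)) = F ∙ zColumn α := by
  ext w
  rw [LinearMap.mem_ker, Submodule.mem_span_singleton]
  constructor
  · intro hw
    refine ⟨w (.inr ()) / α, ?_⟩
    ext (i | i)
    · simpa [zColumn] using (congrFun hw i).symm
    · simp [zColumn, hα]
  · rintro ⟨t, rfl⟩
    ext i
    simp [LinearMap.funLeft, zColumn]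

theorem linearIndepOn_esMatrix_insert_z (hα : α ≠ 0) (U : Set E) :
    LinearIndepOn F ((esMatrix A a b b α)ᵀ ·) (insert (.inr 0) (.inl '' U)) ↔
      LinearIndepOn F (Aᵀ ·) U := by
  rw [linearIndepOn_insert_iff_comp (by simpa [zColumn, funext_iff] using hα)
    (ker_funLeft_inl hα) (by simp) esMatrix_transpose_z,
    linearIndepOn_image_iff Sum.inl_injective.injOn]
  rfl

/-- Away from `a`, the columns of the es-splitting matrix along this map are those of `A`
padded by a zero. -/
def esEmbed (b x : E) : E ⊕ Fin 2 := if x = b then .inr 1 else .inl x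

@[simp]
theorem esEmbed_self (b : E) : esEmbed b b = .inr 1 := if_pos rfl

theorem esEmbed_of_ne {b x : E} (hx : x ≠ b) : esEmbed b x = .inl x := if_neg hx

theorem esEmbed_injective (b : E) : Function.Injective (esEmbed b) := by
  intro x y h
  unfold esEmbed at h
  split_ifs at h <;> simp_all

theorem linearIndepOn_esMatrix_image_esEmbed {U : Set E} (haU : ∀ x ∈ U, x ≠ a) :
    LinearIndepOn F ((esMatrix A a b b α)ᵀ ·) (esEmbed b '' U) ↔ LinearIndepOn F (Aᵀ ·) U := by
  let pad : (m → F) →ₗ[F] (m ⊕ Unit → F) :=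
    (LinearEquiv.sumPiEquivProdPi F m Unit fun _ => F).symm.toLinearMap ∘ₗ LinearMap.inl F _ _
  have hpad : Function.Injective pad := by
    rw [LinearMap.coe_comp]
    exact (LinearEquiv.injective _).comp LinearMap.inl_injective
  have hcol : EqOn ((esMatrix A a b b α)ᵀ ∘ esEmbed b) (pad ∘ (Aᵀ ·)) U := by
    intro x hx
    show (esMatrix A a b b α)ᵀ (esEmbed b x) = pad (Aᵀ x)
    by_cases hxb : x = b
    · rw [hxb, esEmbed_self, esMatrix_transpose_gamma]
      ext (i | i) <;> rfl
    · rw [esEmbed_of_ne hxb, esMatrix_transpose_inl, if_neg (by simp [hxb, haU x hx])]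
      ext (i | i) <;> rfl
  rw [← pad.linearIndepOn_iff_of_injOn hpad.injOn, ← linearIndepOn_congr hcol,
    linearIndepOn_image_iff (esEmbed_injective b).injOn]

theorem not_linearIndepOn_esMatrix_b_z_gamma :
    ¬LinearIndepOn F ((esMatrix A a b b α)ᵀ ·) {.inl b, .inr 0, .inr 1} := by
  intro h
  refine ((linearIndepOn_insert (by simp)).1 h).2 ?_
  rw [esMatrix_transpose_inl_b]
  exact add_mem (Submodule.subset_span ⟨_, by simp, rfl⟩)
    (Submodule.subset_span ⟨_, by simp, rfl⟩)

theorem not_linearIndepOn_esMatrix_image_inl_of_hasPDependence [Fintype E] (hab : a ≠ b)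
    {C : Set E} (hC : HasPDependence A a b C) (hne : C.Nonempty) :
    ¬LinearIndepOn F ((esMatrix A a b b α)ᵀ ·) (.inl '' C) := by
  obtain ⟨c, hcC, hc, hcab⟩ := hC
  obtain ⟨x, hx⟩ := hne
  intro h
  rw [linearIndepOn_image_iff Sum.inl_injective.injOn] at h
  have hl := linearIndepOn_iff.1 h (Finsupp.equivFunOnFinite.symm c)
    ((Finsupp.mem_supported' _ _).2 fun y hy => by simpa using (hcC y).not.1 hy) ?_
  · exact (hcC x).1 hx (by simpa using DFunLike.congr_fun hl x)
  · rw [Finsupp.linearCombination_apply, Finsupp.sum_fintype _ _ (by simp)]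
    simp only [Function.comp_apply, Finsupp.coe_equivFunOnFinite_symm]
    rw [sum_smul_esMatrix_transpose_inl hab, hc, hcab, zero_mul]
    exact Sum.elim_zero_zero

theorem mem_or_mem_of_isCircuit_of_z_mem [Fintype E]
    (hM' : IsVectorMatroid M' (esMatrix A a b b α)) (hab : a ≠ b) (hα : α ≠ 0)
    (hD : IsCircuit M' D) (hz : .inr 0 ∈ D) : .inl a ∈ D ∨ .inl b ∈ D := by
  obtain ⟨l, hl, rfl⟩ := hM'.exists_linearCombination_eq_zero_support_eq hD
  have hbot := esMatrix_bottom_eq_zero hab hα hl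
  simp only [Finset.mem_coe, Finsupp.mem_support_iff] at hz ⊢
  by_contra! h
  simp_all

theorem mem_iff_mem_of_isCircuit_of_z_notMem [Fintype E]
    (hM' : IsVectorMatroid M' (esMatrix A a b b α)) (hab : a ≠ b) (hα : α ≠ 0)
    (hD : IsCircuit M' D) (hz : .inr 0 ∉ D) : .inl a ∈ D ↔ .inl b ∈ D := by
  obtain ⟨l, hl, rfl⟩ := hM'.exists_linearCombination_eq_zero_support_eq hD
  have hbot := esMatrix_bottom_eq_zero hab hα hl
  simp only [Finset.mem_coe, Finsupp.mem_support_iff, not_not] at hz ⊢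
  rw [hz, add_zero, add_eq_zero_iff_eq_neg] at hbot
  simp [hbot]

theorem gamma_notMem_of_isCircuit (hM' : IsVectorMatroid M' (esMatrix A a b b α)) (hab : a ≠ b)
    (hD : IsCircuit M' D) (ha : .inl a ∈ D) (hb : .inl b ∈ D) (hz : .inr 0 ∈ D) :
    .inr 1 ∉ D := by
  intro hγ
  refine not_linearIndepOn_esMatrix_b_z_gamma ((hM'.2 _).1 (hD.2 _ ⟨?_, fun h => ?_⟩))
  · simp [insert_subset_iff, hb, hz, hγ]
  · simpa [hab] using h ha

theorem isNpCircuit_preimage_inl [Fintype E] (hM : IsVectorMatroid M A)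
    (hM' : IsVectorMatroid M' (esMatrix A a b b α)) (hab : a ≠ b) (hα : α ≠ 0)
    (hD : IsCircuit M' D) (hz : .inr 0 ∈ D) (hγ : .inr 1 ∉ D) (ha : .inl a ∈ D) :
    IsNpCircuit M A a b (.inl ⁻¹' D) := by
  have hD_eq : insert (.inr 0) (.inl '' (.inl ⁻¹' D)) = D := by
    ext (x | k)
    · simp
    · fin_cases k <;> simp [hz, hγ]
  have hzC : ∀ U : Set E, (.inr 0 : E ⊕ Fin 2) ∉ .inl '' U := by simp
  refine ⟨IsCircuit.of_indep_iff (f := fun U => insert (Sum.inr 0) (Sum.inl '' U)) (hD_eq ▸ hD)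
    (hM.1 ▸ subset_univ _) (fun U hU => ?_) (fun U _ => ?_), ⟨a, ha, by simp⟩, fun hp => ?_⟩
  · have := (Sum.inl_injective (β := Fin 2)).image_strictMono hU
    rw [ssubset_iff_subset_not_subset] at this ⊢
    simpa only [insert_subset_insert_iff (hzC _)] using this
  · rw [hM.2, hM'.2]
    exact (linearIndepOn_esMatrix_insert_z hα U).symm
  · refine not_linearIndepOn_esMatrix_image_inl_of_hasPDependence hab hp ⟨a, ha⟩
      ((hM'.2 _).1 (hD.2 _ ?_))
    refine ⟨image_preimage_subset _ _, fun h => ?_⟩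
    simpa using h hz

theorem isCircuit_preimage_esEmbed (hM : IsVectorMatroid M A)
    (hM' : IsVectorMatroid M' (esMatrix A a b b α)) (hab : a ≠ b) (hD : IsCircuit M' D)
    (hz : .inr 0 ∉ D) (ha : .inl a ∉ D) (hb : .inl b ∉ D) :
    IsCircuit M (esEmbed b ⁻¹' D) := by
  have hD_eq : esEmbed b '' (esEmbed b ⁻¹' D) = D := by
    refine image_preimage_eq_of_subset fun y hy => ?_
    rcases y with x | k
    · exact ⟨x, by simp [esEmbed, show x ≠ b by rintro rfl; exact hb hy]⟩
    · fin_cases k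
      · exact absurd hy hz
      · exact ⟨b, by simp [esEmbed]⟩
  refine IsCircuit.of_indep_iff (f := image (esEmbed b)) (hD_eq ▸ hD) (hM.1 ▸ subset_univ _)
    (fun U hU => (esEmbed_injective b).image_strictMono hU) (fun U hU => ?_)
  rw [hM.2, hM'.2]
  refine (linearIndepOn_esMatrix_image_esEmbed fun x hx hxa => ha ?_).symm
  simpa [esEmbed, hxa, hab] using hU hx

theorem inl_mem_of_z_mem [Fintype E] {n : ℕ} {D : Fin n → Set (E ⊕ Fin 2)}
    (hM' : IsVectorMatroid M' (esMatrix A a b b α)) (hab : a ≠ b) (hα : α ≠ 0)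
    (hD : ∀ i, IsCircuit M' (D i)) (hdisj : ∀ y i j, y ∈ D i → y ∈ D j → i = j)
    (hcover : ∀ y, ∃ i, y ∈ D i) {i : Fin n} (hz : .inr 0 ∈ D i) :
    .inl a ∈ D i ∧ .inl b ∈ D i := by
  have hiff : ∀ j, j ≠ i → (.inl a ∈ D j ↔ .inl b ∈ D j) := fun j hj =>
    mem_iff_mem_of_isCircuit_of_z_notMem hM' hab hα (hD j) fun h => hj (hdisj _ _ _ h hz)
  obtain ⟨ja, hja⟩ := hcover (.inl a)
  obtain ⟨jb, hjb⟩ := hcover (.inl b)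
  rcases mem_or_mem_of_isCircuit_of_z_mem hM' hab hα (hD i) hz with ha | hb
  · refine ⟨ha, by_contra fun hb => ?_⟩
    have hjb_ne : jb ≠ i := by rintro rfl; exact hb hjb
    exact hjb_ne (hdisj _ _ _ ((hiff jb hjb_ne).2 hjb) ha)
  · refine ⟨by_contra fun ha => ?_, hb⟩
    have hja_ne : ja ≠ i := by rintro rfl; exact ha hja
    exact hja_ne (hdisj _ _ _ ((hiff ja hja_ne).1 hja) hb)

end EsSplitting

theorem Fin.exists_injective_range_eq_compl_singleton {n : ℕ} {i j : Fin n} (hij : i ≠ j) :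
    ∃ (k : ℕ) (r : Fin (k + 1) → Fin n),
      Function.Injective r ∧ range r = {i}ᶜ ∧ r 0 = j := by
  obtain ⟨k, rfl⟩ : ∃ k, n = k + 2 :=
    ⟨n - 2, by have := Fin.val_ne_of_ne hij; omega⟩
  obtain ⟨j0, hj0⟩ := Fin.exists_succAbove_eq hij.symm
  refine ⟨k, i.succAbove ∘ Equiv.swap 0 j0,
    Fin.succAbove_right_injective.comp (Equiv.injective _), ?_, by simp [hj0]⟩
  rw [range_comp, Equiv.range_eq_univ, image_univ, Fin.range_succAbove]

section Partition

variable {E : Type*} [DecidableEq E] {b : E} {n k : ℕ} {D : Fin n → Set (E ⊕ Fin 2)}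
  {iz : Fin n} {r : Fin (k + 1) → Fin n}

theorem esEmbed_preimage_partition (hdisj : ∀ y i j, y ∈ D i → y ∈ D j → i = j)
    (hcover : ∀ y, ∃ i, y ∈ D i) (hr : Function.Injective r) (hrange : range r = {iz}ᶜ)
    (hb : .inl b ∈ D iz) (hγ : .inr 1 ∈ D (r 0)) :
    (univ : Set E) = .inl ⁻¹' D iz ∪ ⋃ t, esEmbed b ⁻¹' D (r t) ∧
      (∀ s t, s ≠ t → Disjoint (esEmbed b ⁻¹' D (r s)) (esEmbed b ⁻¹' D (r t))) ∧
      (∀ t, t ≠ 0 → Disjoint (.inl ⁻¹' D iz) (esEmbed b ⁻¹' D (r t))) ∧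
      .inl ⁻¹' D iz ∩ esEmbed b ⁻¹' D (r 0) = {b} := by
  have hr_ne : ∀ t, r t ≠ iz := fun t => range_subset_iff.1 hrange.subset t
  refine ⟨?_, fun s t hst => ?_, fun t ht => ?_, ?_⟩
  · refine (eq_univ_of_forall fun x => ?_).symm
    obtain ⟨j, hj⟩ := hcover (esEmbed b x)
    by_cases hjz : j = iz
    · subst hjz
      by_cases hxb : x = b
      · exact .inl (hxb ▸ hb)
      · exact .inl (by rwa [mem_preimage, ← esEmbed_of_ne hxb])
    · obtain ⟨t, rfl⟩ : j ∈ range r := hrange ▸ hjz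
      exact .inr (mem_iUnion.2 ⟨t, hj⟩)
  · exact disjoint_left.2 fun x hs ht => hst (hr (hdisj _ _ _ hs ht))
  · refine disjoint_left.2 fun x hz hx => ?_
    by_cases hxb : x = b
    · rw [hxb, mem_preimage, esEmbed_self] at hx
      exact ht (hr (hdisj _ _ _ hx hγ))
    · rw [mem_preimage, esEmbed_of_ne hxb] at hx
      exact hr_ne t (hdisj _ _ _ hx hz)
  · ext x
    refine ⟨fun ⟨hz, hx⟩ => by_contra fun hxb => ?_, fun hx => ?_⟩
    · rw [mem_preimage, esEmbed_of_ne hxb] at hx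
      exact hr_ne 0 (hdisj _ _ _ hx hz)
    · rw [mem_singleton_iff.1 hx]
      exact ⟨hb, by rwa [mem_preimage, esEmbed_self]⟩

end Partition

set_option linter.unusedSectionVars false in
theorem decomposition_of_esSplitting_eulerian_general
    (A : Matrix m E (ZMod p)) (a b : E) (hab : a ≠ b) (α : ZMod p) (hα : α ≠ 0)
    (M : Matroid E) (hM : IsVectorMatroid M A)
    (M' : Matroid (E ⊕ Fin 2)) (hM' : IsVectorMatroid M' (esMatrix A a b b α))
    (hEul : Eulerian M') :
    ∃ (k : ℕ) (Cnp : Set E) (Cs : Fin (k + 1) → Set E),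
      IsNpCircuit M A a b Cnp ∧ a ∈ Cnp ∧ b ∈ Cnp ∧
      (∀ i, IsCircuit M (Cs i)) ∧
      (Set.univ : Set E) = Cnp ∪ (⋃ i, Cs i) ∧
      (∀ i j, i ≠ j → Disjoint (Cs i) (Cs j)) ∧
      (∀ i, i ≠ 0 → Disjoint Cnp (Cs i)) ∧
      Cnp ∩ Cs 0 = {b} := by
  obtain ⟨n, D, hD, hDdisj, hDcover⟩ := hEul
  have hdisj : ∀ y i j, y ∈ D i → y ∈ D j → i = j := fun y i j hi hj =>
    by_contra fun hij => disjoint_left.1 (hDdisj i j hij) hi hj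
  have hcover : ∀ y, ∃ i, y ∈ D i := fun y => mem_iUnion.1 (hDcover ▸ hM'.1 ▸ mem_univ y)
  obtain ⟨iz, hz⟩ := hcover (.inr 0)
  obtain ⟨iγ, hγ⟩ := hcover (.inr 1)
  obtain ⟨ha, hb⟩ := inl_mem_of_z_mem hM' hab hα hD hdisj hcover hz
  have hγz := gamma_notMem_of_isCircuit hM' hab (hD iz) ha hb hz
  obtain ⟨k, r, hr, hrange, hr0⟩ :=
    Fin.exists_injective_range_eq_compl_singleton fun h : iz = iγ => hγz (h ▸ hγ)
  have hr_ne : ∀ t, r t ≠ iz := fun t => range_subset_iff.1 hrange.subset t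
  have hout : ∀ t, ∀ y ∈ D iz, y ∉ D (r t) := fun t y hy hyt => hr_ne t (hdisj _ _ _ hyt hy)
  obtain ⟨hunion, hCs, hCnpCs, hCnpCs0⟩ :=
    esEmbed_preimage_partition hdisj hcover hr hrange hb (hr0 ▸ hγ)
  exact ⟨k, _, _, isNpCircuit_preimage_inl hM hM' hab hα (hD iz) hz hγz ha, ha, hb,
    fun t => isCircuit_preimage_esEmbed hM hM' hab (hD _) (hout t _ hz) (hout t _ ha) (hout t _ hb),
    hunion, hCs, hCnpCs, hCnpCs0⟩

theorem decomposition_of_esSplitting_eulerian (hp2 : 2 < p)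
    (A : Matrix m E (ZMod p)) (a b : E) (hab : a ≠ b) (α : ZMod p) (hα : α ≠ 0)
    (M : Matroid E) (hM : IsVectorMatroid M A)
    (M' : Matroid (E ⊕ Fin 2)) (hM' : IsVectorMatroid M' (esMatrix A a b b α))
    (hEul : Eulerian M') :
    ∃ (k : ℕ) (Cnp : Set E) (Cs : Fin (k + 1) → Set E),
      IsNpCircuit M A a b Cnp ∧ a ∈ Cnp ∧ b ∈ Cnp ∧
      (∀ i, IsCircuit M (Cs i)) ∧
      (Set.univ : Set E) = Cnp ∪ (⋃ i, Cs i) ∧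
      (∀ i j, i ≠ j → Disjoint (Cs i) (Cs j)) ∧
      (∀ i, i ≠ 0 → Disjoint Cnp (Cs i)) ∧
      Cnp ∩ Cs 0 = {b} :=
  decomposition_of_esSplitting_eulerian_general A a b hab α hα M hM M' hM' hEul
end
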